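/- arXiv:2403.00288 — 4 statements merged into one kernel-verified Lean document; each statement's English description precedes it below -/
import Mathlib

section
/- Let H be a real Hilbert space, N : H → H a bounded self-adjoint linear operator, L : ℝⁿ → H a bounded linear map, M an n×n real symmetric matrix, û ∈ H, x̂ ∈ ℝⁿ and ĉ ∈ ℝ, and define J(x;u) = ⟨Nu,u⟩ + 2⟨Lx,u⟩ + ⟨Mx,x⟩ + 2⟨û,u⟩ + 2⟨x̂,x⟩ + ĉ. If for every x ∈ ℝⁿ the function u ↦ J(x;u) attains its infimum over H, then for every x ∈ ℝⁿ the homogeneous functional u ↦ ⟨Nu,u⟩ + 2⟨Lx,u⟩ + ⟨Mx,x⟩ also attains its infimum over H. -/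
open Matrix
open scoped RealInnerProductSpace

/-! The minimiser `u₀` of `J 0` satisfies the first-order condition `N u₀ + û = 0`, and this makes
`J x (w + u₀) = J⁰ x w + c x` for every `x` and `w`: the inhomogeneous functional is the homogeneous
one translated by `u₀` and shifted by a constant `c x`. Hence `u* - u₀` minimises `J⁰ x` whenever `u*`
minimises `J x`. -/

lemma eq_zero_of_forall_mul_sq_add_nonneg {a b : ℝ} (h : ∀ t : ℝ, 0 ≤ a * t ^ 2 + 2 * b * t) :
    b = 0 := by
  have hdiscr : discrim a (2 * b) 0 ≤ 0 :=
    discrim_le_zero fun t => by simpa only [sq, mul_assoc, add_zero] using h t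
  rw [discrim] at hdiscr
  nlinarith [sq_nonneg b]

lemma exists_forall_le_of_add_right_eq {G : Type*} [AddGroup G] {f g : G → ℝ} (u₀ : G) (c : ℝ)
    (hfg : ∀ w, g (w + u₀) = f w + c) (hg : ∃ u, ∀ v, g u ≤ g v) : ∃ u, ∀ v, f u ≤ f v := by
  obtain ⟨u, hu⟩ := hg
  refine ⟨u - u₀, fun v => ?_⟩
  have := hu (v + u₀)
  rw [← sub_add_cancel u u₀, hfg, hfg] at this
  linarith

namespace LinearMap.IsSymmetric

variable {H : Type*} [NormedAddCommGroup H] [InnerProductSpace ℝ H] {T : H →ₗ[ℝ] H}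

lemma inner_map_add_add (hT : T.IsSymmetric) (u v : H) :
    ⟪T (u + v), u + v⟫ = ⟪T u, u⟫ + 2 * ⟪T u, v⟫ + ⟪T v, v⟫ := by
  have : ⟪T v, u⟫ = ⟪T u, v⟫ := by rw [hT, real_inner_comm]
  rw [map_add, inner_add_left, inner_add_right, inner_add_right, this]
  ring

lemma map_add_eq_zero_of_forall_le (hT : T.IsSymmetric) {b u₀ : H}
    (h : ∀ u, ⟪T u₀, u₀⟫ + 2 * ⟪b, u₀⟫ ≤ ⟪T u, u⟫ + 2 * ⟪b, u⟫) : T u₀ + b = 0 := by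
  have horth : ∀ v, ⟪T u₀ + b, v⟫ = 0 := fun v =>
    eq_zero_of_forall_mul_sq_add_nonneg (a := ⟪T v, v⟫) fun t => by
      have := h (u₀ + t • v)
      rw [hT.inner_map_add_add, inner_add_right] at this
      simp only [map_smul, inner_smul_left, inner_smul_right, inner_add_left,
        RCLike.conj_to_real] at this ⊢
      nlinarith
  exact inner_self_eq_zero.mp (horth _)

end LinearMap.IsSymmetric

theorem stmt2_general {H : Type*} [NormedAddCommGroup H] [InnerProductSpace ℝ H]
    {n : ℕ} (N : H →L[ℝ] H) (hN : ∀ u v : H, ⟪N u, v⟫ = ⟪u, N v⟫)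
    (L : (Fin n → ℝ) →L[ℝ] H) (M : Matrix (Fin n) (Fin n) ℝ)
    (uhat : H) (xhat : Fin n → ℝ) (chat : ℝ)
    (J J0 : (Fin n → ℝ) → H → ℝ)
    (hJ : ∀ x u, J x u =
      ⟪N u, u⟫ + 2 * ⟪L x, u⟫ + (M *ᵥ x) ⬝ᵥ x + 2 * ⟪uhat, u⟫
        + 2 * (xhat ⬝ᵥ x) + chat)
    (hJ0 : ∀ x u, J0 x u = ⟪N u, u⟫ + 2 * ⟪L x, u⟫ + (M *ᵥ x) ⬝ᵥ x)
    (hsolv : ∀ x : Fin n → ℝ, ∃ ustar : H, ∀ u : H, J x ustar ≤ J x u) :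
    ∀ x : Fin n → ℝ, ∃ ustar : H, ∀ u : H, J0 x ustar ≤ J0 x u := by
  have hNsymm : (N : H →ₗ[ℝ] H).IsSymmetric := hN
  obtain ⟨u₀, hu₀⟩ := hsolv 0
  have hstationary : N u₀ + uhat = 0 := hNsymm.map_add_eq_zero_of_forall_le fun u => by
    simpa [hJ] using hu₀ u
  intro x
  refine exists_forall_le_of_add_right_eq u₀ (J x u₀ - (M *ᵥ x) ⬝ᵥ x) (fun w => ?_) (hsolv x)
  have hw : ⟪N u₀, w⟫ + ⟪uhat, w⟫ = 0 := by
    rw [← inner_add_left, hstationary, inner_zero_left]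
  have hquad := hNsymm.inner_map_add_add w u₀
  simp only [ContinuousLinearMap.coe_coe] at hquad
  rw [hJ, hJ, hJ0, hquad]
  simp only [inner_add_right]
  linarith [hN w u₀, real_inner_comm w (N u₀)]

/-- If the inhomogeneous quadratic functional attains its infimum for every `x`,
then so does the homogeneous one (Proposition 4.2(ii)). -/
theorem stmt2 {H : Type*} [NormedAddCommGroup H] [InnerProductSpace ℝ H] [CompleteSpace H]
    {n : ℕ} (N : H →L[ℝ] H) (hN : ∀ u v : H, ⟪N u, v⟫ = ⟪u, N v⟫)
    (L : (Fin n → ℝ) →L[ℝ] H) (M : Matrix (Fin n) (Fin n) ℝ) (hM : M.IsSymm)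
    (uhat : H) (xhat : Fin n → ℝ) (chat : ℝ)
    (J J0 : (Fin n → ℝ) → H → ℝ)
    (hJ : ∀ x u, J x u =
      ⟪N u, u⟫ + 2 * ⟪L x, u⟫ + (M *ᵥ x) ⬝ᵥ x + 2 * ⟪uhat, u⟫
        + 2 * (xhat ⬝ᵥ x) + chat)
    (hJ0 : ∀ x u, J0 x u = ⟪N u, u⟫ + 2 * ⟪L x, u⟫ + (M *ᵥ x) ⬝ᵥ x)
    (hsolv : ∀ x : Fin n → ℝ, ∃ ustar : H, ∀ u : H, J x ustar ≤ J x u) :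
    ∀ x : Fin n → ℝ, ∃ ustar : H, ∀ u : H, J0 x ustar ≤ J0 x u :=
  stmt2_general N hN L M uhat xhat chat J J0 hJ hJ0 hsolv
end

section
/- Let S be a finite set, n, m positive integers, and for each i ∈ S let A(i), C(i) be n×n real matrices, B(i), D(i) n×m real matrices, P(i) an n×n real symmetric positive semidefinite matrix, and π(i,j) ∈ ℝ for i,j ∈ S. Suppose P solves, for every i ∈ S, the coupled algebraic Riccati equation P(i)A(i) + A(i)ᵀP(i) + C(i)ᵀP(i)C(i) + I + Σ_{j∈S} π(i,j)P(j) − [P(i)B(i) + C(i)ᵀP(i)D(i)][I + D(i)ᵀP(i)D(i)]^{-1}[P(i)B(i) + C(i)ᵀP(i)D(i)]ᵀ = 0. Define Γ(i) = −[I + D(i)ᵀP(i)D(i)]^{-1}[P(i)B(i) + C(i)ᵀP(i)D(i)]ᵀ. Then for every i ∈ S, P(i)(A(i) + B(i)Γ(i)) + (A(i) + B(i)Γ(i))ᵀP(i) + (C(i) + D(i)Γ(i))ᵀP(i)(C(i) + D(i)Γ(i)) + Σ_{j∈S} π(i,j)P(j) = −(I + Γ(i)ᵀΓ(i)), and in particular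 this matrix is negative definite. -/
open Matrix

/-- Completion-of-squares identity in the proof of Theorem 3.1, (v) ⇒ (i): the feedback
gain `Γ` built from a positive semidefinite solution of the CAREs yields a strict coupled
Lyapunov inequality for the closed-loop coefficients. -/
theorem stmt8 {S : Type*} [Fintype S] {n m : ℕ}
    (A C : S → Matrix (Fin n) (Fin n) ℝ) (B D : S → Matrix (Fin n) (Fin m) ℝ)
    (P : S → Matrix (Fin n) (Fin n) ℝ) (pi : S → S → ℝ)
    (hP : ∀ i, (P i).PosSemidef)
    (hcare : ∀ i,
      P i * A i + (A i)ᵀ * P i + (C i)ᵀ * P i * C i + 1 + (∑ j, pi i j • P j)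
        - (P i * B i + (C i)ᵀ * P i * D i) * (1 + (D i)ᵀ * P i * D i)⁻¹
            * (P i * B i + (C i)ᵀ * P i * D i)ᵀ = 0)
    (Γ : S → Matrix (Fin m) (Fin n) ℝ)
    (hΓ : ∀ i, Γ i = -((1 + (D i)ᵀ * P i * D i)⁻¹ * (P i * B i + (C i)ᵀ * P i * D i)ᵀ)) :
    ∀ i,
      (P i * (A i + B i * Γ i) + (A i + B i * Γ i)ᵀ * P i
          + (C i + D i * Γ i)ᵀ * P i * (C i + D i * Γ i) + (∑ j, pi i j • P j)
        = -(1 + (Γ i)ᵀ * Γ i))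
      ∧ (-(P i * (A i + B i * Γ i) + (A i + B i * Γ i)ᵀ * P i
          + (C i + D i * Γ i)ᵀ * P i * (C i + D i * Γ i) + (∑ j, pi i j • P j))).PosDef := by
  intro i
  have hPt : (P i)ᵀ = P i := by
    have h := (hP i).1.eq
    rwa [conjTranspose_eq_transpose_of_trivial] at h
  set M : Matrix (Fin m) (Fin m) ℝ := 1 + (D i)ᵀ * P i * D i with hMdef
  set N : Matrix (Fin n) (Fin m) ℝ := P i * B i + (C i)ᵀ * P i * D i with hNdef
  have hMpd : M.PosDef := by
    have h1 := (hP i).conjTranspose_mul_mul_same (D i)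
    rw [conjTranspose_eq_transpose_of_trivial] at h1
    exact Matrix.PosDef.one.add_posSemidef h1
  have hMunit : IsUnit M.det := hMpd.det_pos.ne'.isUnit
  have hMM : M * M⁻¹ = 1 := mul_nonsing_inv M hMunit
  have hM'M : M⁻¹ * M = 1 := nonsing_inv_mul M hMunit
  have hMt : Mᵀ = M := by
    simp [hMdef, transpose_add, transpose_mul, Matrix.mul_assoc, hPt]
  have hMinvT : (M⁻¹)ᵀ = M⁻¹ := by rw [transpose_nonsing_inv, hMt]
  have hΓ2 : Γ i = -(M⁻¹ * Nᵀ) := hΓ i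
  have hΓT : (Γ i)ᵀ = -(N * M⁻¹) := by
    rw [hΓ2]; simp [transpose_neg, transpose_mul, hMinvT, transpose_transpose]
  have hQ : P i * A i + (A i)ᵀ * P i + (C i)ᵀ * P i * C i + (∑ j, pi i j • P j)
      = N * M⁻¹ * Nᵀ - 1 := by
    have h0 := hcare i
    rw [sub_eq_zero] at h0
    rw [eq_sub_iff_add_eq, ← h0]
    abel
  have e1 : N * Γ i = -(N * M⁻¹ * Nᵀ) := by
    rw [hΓ2]; simp [Matrix.mul_neg, Matrix.mul_assoc]
  have e2 : (Γ i)ᵀ * Nᵀ = -(N * M⁻¹ * Nᵀ) := by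
    rw [hΓT]; simp [Matrix.neg_mul]
  have eMid : (Γ i)ᵀ * M * Γ i = N * M⁻¹ * Nᵀ := by
    rw [hΓT, hΓ2]
    simp only [Matrix.neg_mul, Matrix.mul_neg, neg_neg]
    rw [Matrix.mul_assoc N, hM'M, Matrix.mul_one, ← Matrix.mul_assoc]
  have e3 : (Γ i)ᵀ * ((D i)ᵀ * P i * D i) * Γ i
      = N * M⁻¹ * Nᵀ - (Γ i)ᵀ * Γ i := by
    have hDPD : (D i)ᵀ * P i * D i = M - 1 := by rw [hMdef]; abel
    rw [hDPD, Matrix.mul_sub, Matrix.mul_one, Matrix.sub_mul, eMid]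
  have expand : P i * (A i + B i * Γ i) + (A i + B i * Γ i)ᵀ * P i
      + (C i + D i * Γ i)ᵀ * P i * (C i + D i * Γ i) + (∑ j, pi i j • P j)
      = (P i * A i + (A i)ᵀ * P i + (C i)ᵀ * P i * C i + (∑ j, pi i j • P j))
        + N * Γ i + (Γ i)ᵀ * Nᵀ + (Γ i)ᵀ * ((D i)ᵀ * P i * D i) * Γ i := by
    simp only [hNdef, transpose_add, transpose_mul, hPt, Matrix.mul_add, Matrix.add_mul,
      Matrix.mul_assoc, transpose_transpose]
    abel
  have h1 : P i * (A i + B i * Γ i) + (A i + B i * Γ i)ᵀ * P i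
      + (C i + D i * Γ i)ᵀ * P i * (C i + D i * Γ i) + (∑ j, pi i j • P j)
      = -(1 + (Γ i)ᵀ * Γ i) := by
    rw [expand, hQ, e1, e2, e3]
    abel
  refine ⟨h1, ?_⟩
  rw [h1, neg_neg]
  have h2 := posSemidef_conjTranspose_mul_self (Γ i)
  rw [conjTranspose_eq_transpose_of_trivial] at h2
  exact Matrix.PosDef.one.add_posSemidef h2
end

section
/- Let n, m be positive integers, P an n×n real symmetric matrix, A, C n×n real matrices, B, D n×m real matrices, Q an n×n real symmetric matrix, S an m×n real matrix, R an m×m real symmetric matrix, Σ an m×n real matrix, and K an n×n real matrix. Define M(P) = PA + AᵀP + CᵀPC + Q + K, L(P) = PB + CᵀPD + Sᵀ, N(P) = DᵀPD + R, A_Σ = A + BΣ, C_Σ = C + DΣ, Q_Σ = Q + SᵀΣ + ΣᵀS + ΣᵀRΣ, S_Σ = S + RΣ, M_Σ(P) = PA_Σ + A_ΣᵀP + C_ΣᵀPC_Σ + Q_Σ + K and L_Σ(P) = PB + C_ΣᵀPD + S_Σᵀ. Let G be an m×m real symmetric matrix satisfying the Penrose conditions for N(P): N(P)·G·N(P) =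 N(P), G·N(P)·G = G, (N(P)G)ᵀ = N(P)G, (GN(P))ᵀ = GN(P). Assume N(P) is positive semidefinite, L_Σ(P)(I − N(P)G) = 0, and M_Σ(P) − L_Σ(P)·G·L_Σ(P)ᵀ = 0. Then L(P)(I − N(P)G) = 0 and M(P) − L(P)·G·L(P)ᵀ = 0. -/
open Matrix

/-- Algebraic core of Proposition 5.2(i): if `P` solves the constrained CAREs of the
feedback-shifted problem, then `P` solves the constrained CAREs of the original problem. -/
theorem stmt10 {n m : ℕ}
    (P A C Q K : Matrix (Fin n) (Fin n) ℝ)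
    (B D : Matrix (Fin n) (Fin m) ℝ) (Sw : Matrix (Fin m) (Fin n) ℝ)
    (R : Matrix (Fin m) (Fin m) ℝ) (Sg : Matrix (Fin m) (Fin n) ℝ)
    (G : Matrix (Fin m) (Fin m) ℝ)
    (hP : P.IsSymm) (hQ : Q.IsSymm) (hR : R.IsSymm) (hGsymm : G.IsSymm)
    (hPen1 : (Dᵀ * P * D + R) * G * (Dᵀ * P * D + R) = Dᵀ * P * D + R)
    (hPen2 : G * (Dᵀ * P * D + R) * G = G)
    (hPen3 : ((Dᵀ * P * D + R) * G)ᵀ = (Dᵀ * P * D + R) * G)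
    (hPen4 : (G * (Dᵀ * P * D + R))ᵀ = G * (Dᵀ * P * D + R))
    (hNpsd : (Dᵀ * P * D + R).PosSemidef)
    (hrange : (P * B + (C + D * Sg)ᵀ * P * D + (Sw + R * Sg)ᵀ)
        * (1 - (Dᵀ * P * D + R) * G) = 0)
    (hcare : (P * (A + B * Sg) + (A + B * Sg)ᵀ * P + (C + D * Sg)ᵀ * P * (C + D * Sg)
        + (Q + Swᵀ * Sg + Sgᵀ * Sw + Sgᵀ * R * Sg) + K)
      - (P * B + (C + D * Sg)ᵀ * P * D + (Sw + R * Sg)ᵀ) * G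
          * (P * B + (C + D * Sg)ᵀ * P * D + (Sw + R * Sg)ᵀ)ᵀ = 0) :
    (P * B + Cᵀ * P * D + Swᵀ) * (1 - (Dᵀ * P * D + R) * G) = 0
    ∧ (P * A + Aᵀ * P + Cᵀ * P * C + Q + K)
        - (P * B + Cᵀ * P * D + Swᵀ) * G * (P * B + Cᵀ * P * D + Swᵀ)ᵀ = 0 := by
  have hPs : Pᵀ = P := hP
  have hRs : Rᵀ = R := hR
  have hGs : Gᵀ = G := hGsymm
  have hNs : (Dᵀ * P * D + R)ᵀ = Dᵀ * P * D + R := by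
    simp [Matrix.transpose_add, Matrix.transpose_mul, Matrix.mul_assoc, hPs, hRs]
  have hLS : P * B + (C + D * Sg)ᵀ * P * D + (Sw + R * Sg)ᵀ
      = (P * B + Cᵀ * P * D + Swᵀ) + Sgᵀ * (Dᵀ * P * D + R) := by
    simp only [Matrix.transpose_add, Matrix.transpose_mul, hPs, hRs]
    simp only [Matrix.mul_add, Matrix.add_mul, Matrix.mul_sub, Matrix.sub_mul, Matrix.mul_one, Matrix.one_mul, Matrix.mul_assoc]; try abel
  rw [hLS] at hrange hcare
  have hexp : (P * (A + B * Sg) + (A + B * Sg)ᵀ * P + (C + D * Sg)ᵀ * P * (C + D * Sg)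
        + (Q + Swᵀ * Sg + Sgᵀ * Sw + Sgᵀ * R * Sg) + K)
      - ((P * B + Cᵀ * P * D + Swᵀ) + Sgᵀ * (Dᵀ * P * D + R)) * G
          * ((P * B + Cᵀ * P * D + Swᵀ) + Sgᵀ * (Dᵀ * P * D + R))ᵀ
      = ((P * A + Aᵀ * P + Cᵀ * P * C + Q + K)
          - (P * B + Cᵀ * P * D + Swᵀ) * G * (P * B + Cᵀ * P * D + Swᵀ)ᵀ)
        + ((P * B + Cᵀ * P * D + Swᵀ) * Sg
            - ((P * B + Cᵀ * P * D + Swᵀ) * G * (Dᵀ * P * D + R)) * Sg)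
        + (Sgᵀ * (P * B + Cᵀ * P * D + Swᵀ)ᵀ
            - Sgᵀ * ((Dᵀ * P * D + R) * G * (P * B + Cᵀ * P * D + Swᵀ)ᵀ))
        + (Sgᵀ * (Dᵀ * P * D + R) * Sg
            - Sgᵀ * ((Dᵀ * P * D + R) * G * (Dᵀ * P * D + R)) * Sg) := by
    simp only [Matrix.transpose_add, Matrix.transpose_mul, Matrix.transpose_transpose,
      hPs, hRs, hGs]
    simp only [Matrix.mul_add, Matrix.add_mul, Matrix.mul_sub, Matrix.sub_mul, Matrix.mul_one, Matrix.one_mul, Matrix.mul_assoc]; try abel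
  rw [hexp] at hcare
  generalize hNg : Dᵀ * P * D + R = N at hPen1 hPen3 hPen4 hrange hcare hNs ⊢
  generalize hLg : P * B + Cᵀ * P * D + Swᵀ = L at hrange hcare ⊢
  have hcomm : N * G = G * N := by
    have h := hPen4
    rw [Matrix.transpose_mul, hGs, hNs] at h
    exact h
  have hN0 : N * (1 - N * G) = 0 := by
    have h : N * (N * G) = N := by
      rw [hcomm, ← Matrix.mul_assoc, hPen1]
    have h2 : N * (1 - N * G) = N - N * (N * G) := by simp only [Matrix.mul_add, Matrix.add_mul, Matrix.mul_sub, Matrix.sub_mul, Matrix.mul_one, Matrix.one_mul, Matrix.mul_assoc]; try abel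
    rw [h2, h, sub_self]
  have part1 : L * (1 - N * G) = 0 := by
    have h : (L + Sgᵀ * N) * (1 - N * G)
        = L * (1 - N * G) + Sgᵀ * (N * (1 - N * G)) := by simp only [Matrix.mul_add, Matrix.add_mul, Matrix.mul_sub, Matrix.sub_mul, Matrix.mul_one, Matrix.one_mul, Matrix.mul_assoc]; try abel
    rw [hrange, hN0, Matrix.mul_zero, add_zero] at h
    exact h.symm
  refine ⟨part1, ?_⟩
  have hLNG : L * (N * G) = L := by
    have h : L * (1 - N * G) = L - L * (N * G) := by simp only [Matrix.mul_add, Matrix.add_mul, Matrix.mul_sub, Matrix.sub_mul, Matrix.mul_one, Matrix.one_mul, Matrix.mul_assoc]; try abel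
    rw [part1] at h
    exact (sub_eq_zero.mp h.symm).symm
  have hLGN : L * G * N = L := by
    rw [Matrix.mul_assoc, ← hcomm, hLNG]
  have hNGLT : N * G * Lᵀ = Lᵀ := by
    have h := congrArg Matrix.transpose hLGN
    simpa [Matrix.transpose_mul, hNs, hGs, Matrix.mul_assoc] using h
  rw [hLGN, hNGLT, hPen1] at hcare
  simpa using hcare
end

section
/- Let n, m be positive integers, N an m×m real symmetric positive semidefinite matrix, G an m×m real symmetric matrix satisfying the Penrose conditions for N (NGN = N, GNG = G, (NG)ᵀ = NG, (GN)ᵀ = GN), L an n×m real matrix and M an n×n real symmetric matrix, and assume M = L·G·Lᵀ and L(I − NG) = 0. Then for every m×n real matrix Π, the matrix Θ := −GLᵀ + (I − GN)Π satisfies Lᵀ + NΘ = 0 and M + LΘ + ΘᵀLᵀ + ΘᵀNΘ = 0. -/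
open Matrix

/-- Algebraic content of Theorem 5.1, (iii) ⇒ (ii): every gain of the form
`Θ = -GLᵀ + (I - GN)Π` satisfies `Lᵀ + NΘ = 0` and the completion-of-squares identity. -/
theorem stmt12 {n m : ℕ}
    (N : Matrix (Fin m) (Fin m) ℝ) (hNsymm : N.IsSymm) (hNpsd : N.PosSemidef)
    (G : Matrix (Fin m) (Fin m) ℝ) (hGsymm : G.IsSymm)
    (hPen1 : N * G * N = N) (hPen2 : G * N * G = G)
    (hPen3 : (N * G)ᵀ = N * G) (hPen4 : (G * N)ᵀ = G * N)
    (L : Matrix (Fin n) (Fin m) ℝ) (M : Matrix (Fin n) (Fin n) ℝ) (hMsymm : M.IsSymm)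
    (hM : M = L * G * Lᵀ) (hrange : L * (1 - N * G) = 0) :
    ∀ Pi0 : Matrix (Fin m) (Fin n) ℝ,
      Lᵀ + N * (-(G * Lᵀ) + (1 - G * N) * Pi0) = 0
      ∧ M + L * (-(G * Lᵀ) + (1 - G * N) * Pi0)
          + (-(G * Lᵀ) + (1 - G * N) * Pi0)ᵀ * Lᵀ
          + (-(G * Lᵀ) + (1 - G * N) * Pi0)ᵀ * N * (-(G * Lᵀ) + (1 - G * N) * Pi0) = 0 := by
  intro Pi0
  have hGN : G * N = N * G := by
    rw [← hPen3, transpose_mul, hGsymm.eq, hNsymm.eq]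
  have hL : L * (N * G) = L := by
    have h : L * (1 : Matrix (Fin m) (Fin m) ℝ) - L * (N * G) = 0 := by
      rw [← Matrix.mul_sub]; exact hrange
    rw [Matrix.mul_one, sub_eq_zero] at h
    exact h.symm
  have hLT : N * (G * Lᵀ) = Lᵀ := by
    have h := congrArg transpose hL
    rw [transpose_mul, hPen3] at h
    rw [← Matrix.mul_assoc]; exact h
  have hNGNP : N * (G * (N * Pi0)) = N * Pi0 := by
    rw [← Matrix.mul_assoc, ← Matrix.mul_assoc, hPen1]
  have h1 : Lᵀ + N * (-(G * Lᵀ) + (1 - G * N) * Pi0) = 0 := by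
    simp only [Matrix.mul_add, Matrix.mul_neg, Matrix.sub_mul, Matrix.one_mul,
      Matrix.mul_sub, Matrix.mul_assoc]
    rw [hLT, hNGNP]
    abel
  refine ⟨h1, ?_⟩
  have hNΘ : N * (-(G * Lᵀ) + (1 - G * N) * Pi0) = -Lᵀ :=
    eq_neg_of_add_eq_zero_right h1
  have hLGN : L * G * N = L := by rw [Matrix.mul_assoc, hGN, hL]
  have hLGNP : L * (G * (N * Pi0)) = L * Pi0 := by
    rw [← Matrix.mul_assoc, ← Matrix.mul_assoc, hLGN]
  have hLΘ : L * (-(G * Lᵀ) + (1 - G * N) * Pi0) = -M := by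
    rw [hM]
    simp only [Matrix.mul_add, Matrix.mul_neg, Matrix.sub_mul, Matrix.one_mul,
      Matrix.mul_sub, Matrix.mul_assoc]
    rw [hLGNP]
    abel
  rw [Matrix.mul_assoc _ N _, hNΘ, hLΘ, Matrix.mul_neg]
  abel
end
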